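/- arXiv:2604.16159 — 2 statements merged into one kernel-verified Lean document; each statement's English description precedes it below -/
import Mathlib

section
/- Let G be a graph satisfying the triangle condition TC, and let (A,B) be a shadow-closed osculating pair of sets (A = A/B, B = B/A, A and B disjoint, and there is an edge between A and B). Then for any vertex x ∉ A ∪ B and any edge ab with a ∈ A, b ∈ B, there exists a vertex x₀ ∉ A ∪ B adjacent to both a and b with x₀ ∈ I(x,a) ∩ I(x,b). -/
variable {V : Type*}

def interval (G : SimpleGraph V) (u v : V) : Set V :=
  {x | G.dist u x + G.dist x v = G.dist u v}

def GeoConvex (G : SimpleGraph V) (X : Set V) : Prop :=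
  ∀ u ∈ X, ∀ v ∈ X, interval G u v ⊆ X

def geoHull (G : SimpleGraph V) (S : Set V) : Set V :=
  ⋂₀ {C | GeoConvex G C ∧ S ⊆ C}

def shadow (G : SimpleGraph V) (A B : Set V) : Set V :=
  {x | (geoHull G (B ∪ {x}) ∩ A).Nonempty}

/-- Triangle condition. -/
def TriangleCond (G : SimpleGraph V) : Prop :=
  ∀ u v w : V, G.Adj v w → G.dist u v = G.dist u w → 1 < G.dist u v →
    ∃ x, G.Adj v x ∧ G.Adj w x ∧ G.dist u x = G.dist u v - 1

/-!
If `x ∉ A ∪ B` were closer to one end of an edge `ab` between `A` and `B`, that end would lie on a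
geodesic from `x` to the other, so `x` would lie in a shadow; hence `x` is equidistant from `a`
and `b`. The triangle condition (or `x` itself, when `x` is a common neighbour) then gives a common
neighbour `x₀` of `a` and `b` one step closer to `x`, which therefore lies in `I(x,a) ∩ I(x,b)`.
If `x₀` were in `A`, say, then `x₀b` would be an `A`–`B` edge whose ends have different distances
from `x`, contradicting equidistance.
-/

namespace SimpleGraph

variable {G : SimpleGraph V}

lemma interval_subset_geoHull {S : Set V} {u v : V} (hu : u ∈ S) (hv : v ∈ S) :
    interval G u v ⊆ geoHull G S :=
  fun _ hy _ hC ↦ hC.1 u (hC.2 hu) v (hC.2 hv) hy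

lemma mem_shadow_of_mem_interval {A B : Set V} {x a b : V} (ha : a ∈ A) (hb : b ∈ B)
    (h : a ∈ interval G x b) : x ∈ shadow G A B :=
  ⟨a, interval_subset_geoHull (S := B ∪ {x}) (Or.inr rfl) (Or.inl hb) h, ha⟩

lemma mem_interval_of_adj_of_dist_succ {x a b : V} (hab : G.Adj a b)
    (h : G.dist x a + 1 = G.dist x b) : a ∈ interval G x b := by
  show G.dist x a + G.dist a b = G.dist x b
  rwa [dist_eq_one_iff_adj.mpr hab]

lemma Connected.dist_eq_of_adj_of_notMem_shadow (hc : G.Connected) {A B : Set V} {x a b : V}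
    (hxA : x ∉ shadow G A B) (hxB : x ∉ shadow G B A)
    (ha : a ∈ A) (hb : b ∈ B) (hab : G.Adj a b) : G.dist x a = G.dist x b := by
  have hab' : G.dist a b = 1 := dist_eq_one_iff_adj.mpr hab
  have hba' : G.dist b a = 1 := dist_eq_one_iff_adj.mpr hab.symm
  have hxa : G.dist x a ≤ G.dist x b + G.dist b a := hc.dist_triangle
  have hxb : G.dist x b ≤ G.dist x a + G.dist a b := hc.dist_triangle
  by_contra hne
  rcases (by omega : G.dist x a + 1 = G.dist x b ∨ G.dist x b + 1 = G.dist x a) with h | h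
  · exact hxA (mem_shadow_of_mem_interval ha hb (mem_interval_of_adj_of_dist_succ hab h))
  · exact hxB (mem_shadow_of_mem_interval hb ha (mem_interval_of_adj_of_dist_succ hab.symm h))

lemma TriangleCond.exists_adj_adj_dist_succ (hTC : TriangleCond G) {x a b : V}
    (hab : G.Adj a b) (heq : G.dist x a = G.dist x b) (hpos : 0 < G.dist x a) :
    ∃ x₀, G.Adj x₀ a ∧ G.Adj x₀ b ∧ G.dist x x₀ + 1 = G.dist x a := by
  rcases (Nat.one_le_iff_ne_zero.mpr hpos.ne').eq_or_lt with h1 | h1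
  · refine ⟨x, ?_, ?_, by simpa using h1⟩
    · exact dist_eq_one_iff_adj.mp h1.symm
    · exact dist_eq_one_iff_adj.mp (heq ▸ h1.symm)
  · obtain ⟨x₀, hax₀, hbx₀, hd⟩ := hTC x a b hab heq h1
    exact ⟨x₀, hax₀.symm, hbx₀.symm, by omega⟩

end SimpleGraph

open SimpleGraph in
theorem shadowClosed_osculating_Sx_nonempty_general (G : SimpleGraph V) (hc : G.Connected)
    (hTC : TriangleCond G)
    (A B : Set V)
    (hA : shadow G A B = A) (hB : shadow G B A = B)
    (x : V) (hx : x ∉ A ∪ B)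
    (a b : V) (ha : a ∈ A) (hb : b ∈ B) (hab : G.Adj a b) :
    ∃ x₀, x₀ ∉ A ∪ B ∧ G.Adj x₀ a ∧ G.Adj x₀ b ∧
      x₀ ∈ interval G x a ∩ interval G x b := by
  have hxA : x ∉ shadow G A B := by rw [hA]; exact fun h ↦ hx (Or.inl h)
  have hxB : x ∉ shadow G B A := by rw [hB]; exact fun h ↦ hx (Or.inr h)
  have equidist {a b : V} (ha : a ∈ A) (hb : b ∈ B) (hab : G.Adj a b) :
      G.dist x a = G.dist x b :=
    hc.dist_eq_of_adj_of_notMem_shadow hxA hxB ha hb hab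
  have heq : G.dist x a = G.dist x b := equidist ha hb hab
  have hpos : 0 < G.dist x a := hc.pos_dist_of_ne fun h ↦ hx (Or.inl (h ▸ ha))
  obtain ⟨x₀, hx₀a, hx₀b, hd⟩ := hTC.exists_adj_adj_dist_succ hab heq hpos
  refine ⟨x₀, ?_, hx₀a, hx₀b, mem_interval_of_adj_of_dist_succ hx₀a hd,
    mem_interval_of_adj_of_dist_succ hx₀b (heq ▸ hd)⟩
  rintro (h | h)
  · have := equidist h hb hx₀b
    omega
  · have := equidist ha h hx₀a.symm
    omega

theorem shadowClosed_osculating_Sx_nonempty (G : SimpleGraph V) (hc : G.Connected)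
    (hTC : TriangleCond G)
    (A B : Set V) (hdisj : Disjoint A B)
    (hA : shadow G A B = A) (hB : shadow G B A = B)
    (hosc : ∃ a ∈ A, ∃ b ∈ B, G.Adj a b)
    (x : V) (hx : x ∉ A ∪ B)
    (a b : V) (ha : a ∈ A) (hb : b ∈ B) (hab : G.Adj a b) :
    ∃ x₀, x₀ ∉ A ∪ B ∧ G.Adj x₀ a ∧ G.Adj x₀ b ∧
      x₀ ∈ interval G x a ∩ interval G x b :=
  shadowClosed_osculating_Sx_nonempty_general G hc hTC A B hA hB x hx a b ha hb hab
end

section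
/- Let G be a graph satisfying the triangle condition TC and let (A,B) be a shadow-closed osculating pair of geodesically convex sets with residue V⁺ = V ∖ (A ∪ B). For any partition of V⁺ into A⁺ and B⁺ satisfying the implication constraints (for x,y ∈ V⁺: if y lies on a geodesic from x to some vertex of A and x ∈ A⁺ then y ∈ A⁺; if y lies on a geodesic from x to some vertex of B and x ∈ B⁺ then y ∈ B⁺), the induced subgraphs on A ∪ A⁺ and on B ∪ B⁺ are connected. -/
variable {V : Type*}

/-!
Fix `a ∈ A`. The set `A ∪ A⁺` is geodesically star-shaped around `a`: every geodesic from one of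
its vertices to `a` stays inside it. For a start in `A` this is convexity of `A`. For a start
`x ∈ A⁺`, a vertex of `B` on a geodesic from `x` to `a` would lie in the convex hull of `A ∪ {x}`,
putting `x` in the shadow `B/A = B`; so the geodesic avoids `B`, and the implication constraint
puts its vertices outside `A` into `A⁺`. A star-shaped set induces a connected subgraph, since
every vertex can walk towards `a` along a geodesic.
-/

variable {G : SimpleGraph V}

lemma geoConvex_geoHull (S : Set V) : GeoConvex G (geoHull G S) :=
  fun _ hu _ hv _ hx C hC => hC.1 _ (hu C hC) _ (hv C hC) hx

lemma subset_geoHull (S : Set V) : S ⊆ geoHull G S :=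
  fun _ hx _ hC => hC.2 hx

lemma mem_shadow_of_mem_interval {A B : Set V} {x a y : V} (ha : a ∈ A) (hyB : y ∈ B)
    (hy : y ∈ interval G x a) : x ∈ shadow G B A :=
  ⟨y, geoConvex_geoHull _ x (subset_geoHull _ (Or.inr rfl)) a (subset_geoHull _ (Or.inl ha)) hy,
    hyB⟩

lemma SimpleGraph.Reachable.exists_adj_mem_interval {x a : V} (h : G.Reachable x a)
    (hne : x ≠ a) : ∃ y, G.Adj x y ∧ y ∈ interval G x a ∧ G.dist y a < G.dist x a := by
  obtain ⟨p, hp⟩ := h.exists_walk_length_eq_dist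
  cases p with
  | nil => exact absurd rfl hne
  | @cons _ y _ hxy q =>
    have hq : G.dist y a ≤ q.length := SimpleGraph.dist_le q
    have hxy1 : G.dist x y = 1 := SimpleGraph.dist_eq_one_iff_adj.mpr hxy
    have htri : G.dist x a ≤ G.dist x y + G.dist y a := hxy.reachable.dist_triangle_left a
    rw [SimpleGraph.Walk.length_cons] at hp
    exact ⟨y, hxy, show G.dist x y + G.dist y a = G.dist x a by omega, by omega⟩

lemma SimpleGraph.Connected.induce_of_interval_subset (hc : G.Connected) {S : Set V} {a : V}
    (ha : a ∈ S) (hstar : ∀ x ∈ S, interval G x a ⊆ S) : (G.induce S).Connected := by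
  have reach_a : ∀ n, ∀ x (hx : x ∈ S), G.dist x a = n → (G.induce S).Reachable ⟨x, hx⟩ ⟨a, ha⟩ := by
    intro n
    induction n using Nat.strong_induction_on with
    | _ n ih =>
      intro x hx hn
      by_cases hxa : x = a
      · subst hxa
        rfl
      obtain ⟨y, hxy, hy, hlt⟩ := (hc x a).exists_adj_mem_interval hxa
      have hyS : y ∈ S := hstar x hx hy
      have hstep : (G.induce S).Adj ⟨x, hx⟩ ⟨y, hyS⟩ := hxy
      exact hstep.reachable.trans (ih _ (hn ▸ hlt) y hyS rfl)
  rw [SimpleGraph.connected_iff]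
  refine ⟨?_, ⟨⟨a, ha⟩⟩⟩
  rintro ⟨u, hu⟩ ⟨v, hv⟩
  exact (reach_a _ u hu rfl).trans (reach_a _ v hv rfl).symm

lemma interval_subset_union_of_shadow_eq {A B Aplus : Set V} (hAconv : GeoConvex G A)
    (hB : shadow G B A = B) (hAp : Aplus ⊆ (A ∪ B)ᶜ)
    (himplA : ∀ x ∈ Aplus, ∀ y ∈ (A ∪ B)ᶜ, (∃ z ∈ A, y ∈ interval G x z) → y ∈ Aplus)
    {a : V} (ha : a ∈ A) : ∀ x ∈ A ∪ Aplus, interval G x a ⊆ A ∪ Aplus := by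
  rintro x (hxA | hxAp) y hy
  · exact Or.inl (hAconv x hxA a ha hy)
  · have hxB : x ∉ B := fun h => hAp hxAp (Or.inr h)
    have hyB : y ∉ B := fun h => hxB (hB ▸ mem_shadow_of_mem_interval ha h hy)
    by_cases hyA : y ∈ A
    · exact Or.inl hyA
    · exact Or.inr (himplA x hxAp y (by simp [hyA, hyB]) ⟨a, ha, hy⟩)

theorem sides_connected_general (G : SimpleGraph V) (hc : G.Connected)
    (A B : Set V) (hAconv : GeoConvex G A) (hBconv : GeoConvex G B)
    (hA : shadow G A B = A) (hB : shadow G B A = B)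
    (hosc : ∃ a ∈ A, ∃ b ∈ B, G.Adj a b)
    (Aplus Bplus : Set V)
    (hpart : Aplus ∪ Bplus = (A ∪ B)ᶜ)
    (himplA : ∀ x ∈ Aplus, ∀ y ∈ (A ∪ B)ᶜ, (∃ z ∈ A, y ∈ interval G x z) → y ∈ Aplus)
    (himplB : ∀ x ∈ Bplus, ∀ y ∈ (A ∪ B)ᶜ, (∃ z ∈ B, y ∈ interval G x z) → y ∈ Bplus) :
    (SimpleGraph.induce (A ∪ Aplus) G).Connected ∧
      (SimpleGraph.induce (B ∪ Bplus) G).Connected := by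
  obtain ⟨a, ha, b, hb, -⟩ := hosc
  have hAp : Aplus ⊆ (A ∪ B)ᶜ := hpart ▸ Set.subset_union_left
  have hBp : Bplus ⊆ (B ∪ A)ᶜ := Set.union_comm A B ▸ hpart ▸ Set.subset_union_right
  rw [Set.union_comm A B] at himplB
  exact ⟨hc.induce_of_interval_subset (Or.inl ha)
      (interval_subset_union_of_shadow_eq hAconv hB hAp himplA ha),
    hc.induce_of_interval_subset (Or.inl hb)
      (interval_subset_union_of_shadow_eq hBconv hA hBp himplB hb)⟩

theorem sides_connected (G : SimpleGraph V) (hc : G.Connected) (hTC : TriangleCond G)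
    (A B : Set V) (hAconv : GeoConvex G A) (hBconv : GeoConvex G B)
    (hdisj : Disjoint A B)
    (hA : shadow G A B = A) (hB : shadow G B A = B)
    (hosc : ∃ a ∈ A, ∃ b ∈ B, G.Adj a b)
    (Aplus Bplus : Set V)
    (hpart : Aplus ∪ Bplus = (A ∪ B)ᶜ) (hpdisj : Disjoint Aplus Bplus)
    (himplA : ∀ x ∈ Aplus, ∀ y ∈ (A ∪ B)ᶜ, (∃ z ∈ A, y ∈ interval G x z) → y ∈ Aplus)
    (himplB : ∀ x ∈ Bplus, ∀ y ∈ (A ∪ B)ᶜ, (∃ z ∈ B, y ∈ interval G x z) → y ∈ Bplus) :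
    (SimpleGraph.induce (A ∪ Aplus) G).Connected ∧
      (SimpleGraph.induce (B ∪ Bplus) G).Connected :=
  sides_connected_general G hc A B hAconv hBconv hA hB hosc Aplus Bplus hpart himplA himplB
end
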